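/- Normality fails in the participatory-budgeting model with non-unit costs already for 3 voters: with voters {1,2,3}, three candidates approved by pairs {1,2}, {1,3}, {2,3} respectively, each of cost 2, and total budget 3, the utility vector (1,1,1) is achievable by a fractional allocation (half of each candidate, total cost 3) but by no integral selection of candidates within budget 3. -/

import Mathlib

/-!
Giving every candidate weight `1/2` costs exactly the budget `3`, and since each voter approves
two candidates, each voter gets utility `1`. Integrally, the budget `3` admits at most one
candidate of cost `2`, and no single candidate is approved by all three voters.
-/

/-- Approvers of the three candidates in the participatory budgeting example:
candidate 0 is approved by voters {1,2}, candidate 1 by {1,3}, candidate 2 by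
{2,3} (0-indexed). -/
def pbApp : Fin 3 → Finset (Fin 3) := ![{0, 1}, {0, 2}, {1, 2}]

open Finset

theorem sum_ite_mem_const {α β R : Type*} [Fintype α] [DecidableEq β] [NonAssocSemiring R]
    (app : α → Finset β) (i : β) (c : R) :
    (∑ j, if i ∈ app j then c else 0) = #{j | i ∈ app j} * c := by
  rw [← sum_filter, sum_const, nsmul_eq_mul]

theorem card_le_one_of_sum_two_le_three {α : Type*} {S : Finset α} (h : ∑ _j ∈ S, 2 ≤ 3) :
    #S ≤ 1 := by
  rw [sum_const, smul_eq_mul] at h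
  omega

theorem exists_filter_mem_eq_empty_of_card_le_one {α β : Type*} [DecidableEq β] [Nonempty β]
    {app : α → Finset β} (hmiss : ∀ j, ∃ i, i ∉ app j) {S : Finset α} (hS : #S ≤ 1) :
    ∃ i, S.filter (fun j => i ∈ app j) = ∅ := by
  rcases Nat.le_one_iff_eq_zero_or_eq_one.mp hS with h0 | h1
  · exact ⟨Classical.arbitrary β, by simp [card_eq_zero.mp h0]⟩
  · obtain ⟨j, rfl⟩ := card_eq_one.mp h1
    obtain ⟨i, hi⟩ := hmiss j
    exact ⟨i, by simp [hi]⟩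

theorem card_pbApp_approved (i : Fin 3) : #{j | i ∈ pbApp j} = 2 := by
  fin_cases i <;> decide

theorem exists_notMem_pbApp (j : Fin 3) : ∃ i, i ∉ pbApp j := by
  fin_cases j <;> decide

theorem stmt18 :
    (∃ x : Fin 3 → ℝ, (∀ j, 0 ≤ x j ∧ x j ≤ 1) ∧
      (∑ j, 2 * x j) ≤ 3 ∧
      (∀ i : Fin 3, (1 : ℝ) ≤ ∑ j, if i ∈ pbApp j then x j else 0)) ∧
    ¬ ∃ S : Finset (Fin 3), (∑ _j ∈ S, 2) ≤ 3 ∧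
        ∀ i : Fin 3, 1 ≤ (S.filter (fun j => i ∈ pbApp j)).card := by
  refine ⟨⟨fun _ => 1 / 2, fun _ => by norm_num, by norm_num, fun i => ?_⟩, ?_⟩
  · rw [sum_ite_mem_const, card_pbApp_approved]
    norm_num
  · rintro ⟨S, hcost, hcover⟩
    obtain ⟨i, hi⟩ := exists_filter_mem_eq_empty_of_card_le_one exists_notMem_pbApp
      (card_le_one_of_sum_two_le_three hcost)
    simpa [hi] using hcover i
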